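/- Let Z be a topologically ordered *-space, S₀(Z) ⊆ S_*(Z) a family of seminorms generating the topology of Z, E a topological VE-space over Z such that for every p ∈ S₀(Z) the quotient normed VE-space E_p := E/Ĩ_p (with norm ‖x + Ĩ_p‖ = p̃(x)) is barrelled, and F a topological VE-space over Z. Then every adjointable linear operator T : E → F is S₀(Z)-bounded: for every p ∈ S₀(Z) there exists C ≥ 0 such that p̃(Tx) ≤ C p̃(x) for all x ∈ E. -/

import Mathlib

open scoped ComplexConjugate Topology

/-- The data of an ordered `*`-space structure on a complex vector space `Z`:
a conjugate-linear involution and a strict convex cone of selfadjoint elements. -/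
structure OrderedStarData (Z : Type*) [AddCommGroup Z] [Module ℂ Z] where
  star : Z → Z
  star_add : ∀ x y : Z, star (x + y) = star x + star y
  star_smul : ∀ (c : ℂ) (x : Z), star (c • x) = (starRingEnd ℂ) c • star x
  star_star : ∀ x : Z, star (star x) = x
  cone : Set Z
  cone_zero : (0 : Z) ∈ cone
  cone_add : ∀ x ∈ cone, ∀ y ∈ cone, x + y ∈ cone
  cone_smul : ∀ r : ℝ, 0 ≤ r → ∀ x ∈ cone, (r : ℂ) • x ∈ cone
  cone_strict : ∀ x ∈ cone, -x ∈ cone → x = 0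
  cone_star : ∀ x ∈ cone, star x = x

namespace OrderedStarData

variable {Z : Type*} [AddCommGroup Z] [Module ℂ Z]

/-- A seminorm is increasing when `0 ≤ x ≤ y` implies `p x ≤ p y`. -/
def Increasing (D : OrderedStarData Z) (p : Seminorm ℂ Z) : Prop :=
  ∀ x y : Z, x ∈ D.cone → y - x ∈ D.cone → p x ≤ p y

/-- A `*`-seminorm: `p (z*) = p z`. -/
def StarSeminorm (D : OrderedStarData Z) (p : Seminorm ℂ Z) : Prop :=
  ∀ z : Z, p (D.star z) = p z

end OrderedStarData

/-- A topologically ordered `*`-space: an ordered `*`-space with a Hausdorff locally convex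
topology generated by a family of increasing seminorms, continuous involution and closed cone. -/
structure TopOrderedStarSpace (Z : Type*) [AddCommGroup Z] [Module ℂ Z]
    [TopologicalSpace Z] extends OrderedStarData Z where
  t2 : T2Space Z
  star_continuous : Continuous star
  cone_closed : IsClosed cone
  seminorms_generate : ∃ (ι : Type) (hι : Nonempty ι) (q : ι → Seminorm ℂ Z),
      (∀ i, ∀ x y : Z, x ∈ cone → y - x ∈ cone → q i x ≤ q i y) ∧
      (letI := hι; WithSeminorms q)

namespace TopOrderedStarSpace

variable {Z : Type*} [AddCommGroup Z] [Module ℂ Z] [TopologicalSpace Z]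

/-- Membership in `S_*(Z)`, the set of continuous increasing `*`-seminorms. -/
def MemSStar (D : TopOrderedStarSpace Z) (p : Seminorm ℂ Z) : Prop :=
  Continuous ⇑p ∧ D.toOrderedStarData.Increasing p ∧ D.toOrderedStarData.StarSeminorm p

end TopOrderedStarSpace

/-- The topology of `Z` is generated by the family of seminorms `S`. -/
def GeneratesTopology {Z : Type*} [AddCommGroup Z] [Module ℂ Z] [TopologicalSpace Z]
    (S : Set (Seminorm ℂ Z)) : Prop :=
  ∃ h : Nonempty ↥S, letI := h; WithSeminorms (fun p : ↥S => (p : Seminorm ℂ Z))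

/-- A `Z`-valued gramian (vector valued inner product) on `E`, making `E` a VE-space over `Z`. -/
structure Gramian {Z : Type*} [AddCommGroup Z] [Module ℂ Z] (D : OrderedStarData Z)
    (E : Type*) [AddCommGroup E] [Module ℂ E] where
  inner : E → E → Z
  inner_self_mem : ∀ x : E, inner x x ∈ D.cone
  inner_self_eq_zero : ∀ x : E, inner x x = 0 → x = 0
  inner_herm : ∀ x y : E, inner x y = D.star (inner y x)
  inner_add_right : ∀ x y₁ y₂ : E, inner x (y₁ + y₂) = inner x y₁ + inner x y₂
  inner_smul_right : ∀ (a : ℂ) (x y : E), inner x (a • y) = a • inner x y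

namespace Gramian

variable {Z : Type*} [AddCommGroup Z] [Module ℂ Z] {D : OrderedStarData Z}
  {E : Type*} [AddCommGroup E] [Module ℂ E]
  {F : Type*} [AddCommGroup F] [Module ℂ F]

/-- The seminorm `p̃ x = p ([x,x])^{1/2}` induced on a VE-space by a seminorm on `Z`. -/
noncomputable def tilde (B : Gramian D E) (p : Seminorm ℂ Z) (x : E) : ℝ :=
  Real.sqrt (p (B.inner x x))

/-- `S` is an adjoint of `T` : `[Tx, y] = [x, Sy]`. -/
def IsAdjoint (BE : Gramian D E) (BF : Gramian D F) (T : E →ₗ[ℂ] F) (S : F →ₗ[ℂ] E) : Prop :=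
  ∀ (x : E) (y : F), BF.inner (T x) y = BE.inner x (S y)

/-- `T` is adjointable. -/
def Adjointable (BE : Gramian D E) (BF : Gramian D F) (T : E →ₗ[ℂ] F) : Prop :=
  ∃ S : F →ₗ[ℂ] E, BE.IsAdjoint BF T S

/-- `T` is bounded for the seminorm `p` : `p̃ (Tx) ≤ C p̃ x`. -/
def BoundedFor (BE : Gramian D E) (BF : Gramian D F) (T : E →ₗ[ℂ] F) (p : Seminorm ℂ Z) : Prop :=
  ∃ C : ℝ, 0 ≤ C ∧ ∀ x : E, BF.tilde p (T x) ≤ C * BE.tilde p x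

/-- The operator seminorm `p̄ T`, the infimum of the admissible bounds. -/
noncomputable def opSeminorm (BE : Gramian D E) (BF : Gramian D F) (T : E →ₗ[ℂ] F)
    (p : Seminorm ℂ Z) : ℝ :=
  sInf {C : ℝ | 0 ≤ C ∧ ∀ x : E, BF.tilde p (T x) ≤ C * BE.tilde p x}

/-- The topology of `E` is the one of a topological VE-space: it is generated by the
seminorms `p̃` for `p ∈ S`. -/
def IsVETopology [TopologicalSpace E] (B : Gramian D E) (S : Set (Seminorm ℂ Z)) : Prop :=
  ∃ h : Nonempty ↥S, letI := h;
    ∃ q : ↥S → Seminorm ℂ E, (∀ (p : ↥S) (x : E), q p x = B.tilde p.1 x) ∧ WithSeminorms q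

end Gramian

/-- A barrel: a closed, absorbent, balanced, convex set. -/
def IsBarrel {E : Type*} [AddCommGroup E] [Module ℂ E] [TopologicalSpace E] (s : Set E) : Prop :=
  IsClosed s ∧ Absorbent ℂ s ∧ Balanced ℂ s ∧ Convex ℝ s

/-- A (complex) topological vector space is barrelled if every barrel is a neighbourhood of `0`. -/
def BarrelledSp (E : Type*) [AddCommGroup E] [Module ℂ E] [TopologicalSpace E] : Prop :=
  ∀ s : Set E, IsBarrel s → s ∈ 𝓝 (0 : E)

/-- A barrel with respect to the topology of a norm function `N`. -/
def IsBarrelWrtNorm {V : Type*} [AddCommGroup V] [Module ℂ V] (N : V → ℝ) (s : Set V) : Prop :=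
  (∀ x : V, (∀ ε : ℝ, 0 < ε → ∃ y ∈ s, N (x - y) < ε) → x ∈ s) ∧
  Absorbent ℂ s ∧ Balanced ℂ s ∧ Convex ℝ s

/-- Barrelledness with respect to the topology of a norm function `N`. -/
def BarrelledWrtNorm {V : Type*} [AddCommGroup V] [Module ℂ V] (N : V → ℝ) : Prop :=
  ∀ s : Set V, IsBarrelWrtNorm N s → ∃ ε : ℝ, 0 < ε ∧ ∀ x : V, N x < ε → x ∈ s

/-- The kernel of a seminorm, as a submodule. -/
def semKer {Z : Type*} [AddCommGroup Z] [Module ℂ Z] (p : Seminorm ℂ Z) : Submodule ℂ Z where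
  carrier := {z | p z = 0}
  add_mem' := by
    intro a b ha hb
    simp only [Set.mem_setOf_eq] at ha hb ⊢
    exact le_antisymm ((map_add_le_add p a b).trans (by simp [ha, hb])) (apply_nonneg p _)
  zero_mem' := map_zero p
  smul_mem' := by
    intro c x hx
    simp only [Set.mem_setOf_eq] at hx ⊢
    rw [map_smul_eq_mul, hx, mul_zero]

/-!
For an increasing seminorm `p`, the gramian satisfies `p [x, y] ≤ 4 p̃ x p̃ y`: by polarization,
`[x, y] + [y, x]` is half the difference of `[x + y, x + y]` and `[x - y, x - y]`, two elements of
the cone each dominated by their sum `2 ([x, x] + [y, y])`; a rotation by `I` and the rescaling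
`x ↦ t x`, `y ↦ t⁻¹ y` give the product form. Hence `p̃` is constant on cosets of its null space,
and barrelledness of `E_p` transfers to `E` with the gauge `p̃`. For adjointable `T` the seminorms
`x ↦ p [y, T x] = p [T* y, x]`, `p̃ y ≤ 1`, are each `p̃`-bounded and pointwise bounded by
`4 p̃ (T x)`, so the Banach–Steinhaus argument in the barrelled space makes them uniformly
`p̃`-bounded, and `y = T x / p̃ (T x)` then bounds `p̃ (T x)`.
-/

theorem le_two_mul_mul_of_forall_pos {a α β : ℝ} (hα : 0 ≤ α) (hβ : 0 ≤ β)
    (h : ∀ t : ℝ, 0 < t → a ≤ (t * α) ^ 2 + (t⁻¹ * β) ^ 2) : a ≤ 2 * α * β := by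
  refine le_of_forall_pos_le_add fun ε hε => ?_
  -- the optimal `t ^ 2 = β / α`, perturbed by `δ` so that it exists when `α` or `β` vanishes
  set δ := ε / (α + β + 1)
  have hδ : 0 < δ := by positivity
  set t := Real.sqrt ((β + δ) / (α + δ))
  have ht : 0 < t := Real.sqrt_pos.2 (by positivity)
  have ht2 : t ^ 2 = (β + δ) / (α + δ) := Real.sq_sqrt (by positivity)
  have hα' : (β + δ) / (α + δ) * α ^ 2 ≤ (β + δ) * α := by
    rw [div_mul_eq_mul_div, div_le_iff₀ (by positivity)]
    nlinarith [mul_nonneg (mul_nonneg hα hδ.le) (by positivity : 0 ≤ β + δ)]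
  have hβ' : (α + δ) / (β + δ) * β ^ 2 ≤ (α + δ) * β := by
    rw [div_mul_eq_mul_div, div_le_iff₀ (by positivity)]
    nlinarith [mul_nonneg (mul_nonneg hβ hδ.le) (by positivity : 0 ≤ α + δ)]
  have hδε : δ * (α + β) ≤ ε := by
    rw [div_mul_eq_mul_div, div_le_iff₀ (by positivity)]
    nlinarith
  calc a ≤ (t * α) ^ 2 + (t⁻¹ * β) ^ 2 := h t ht
    _ = (β + δ) / (α + δ) * α ^ 2 + (α + δ) / (β + δ) * β ^ 2 := by
      rw [mul_pow, mul_pow, inv_pow, ht2, inv_div]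
    _ ≤ 2 * α * β + ε := by nlinarith

theorem BarrelledWrtNorm.comp_surjective {V W : Type*} [AddCommGroup V] [Module ℂ V]
    [AddCommGroup W] [Module ℂ W] {N : W → ℝ} (hN : BarrelledWrtNorm N) (hN0 : N 0 = 0)
    {π : V →ₗ[ℂ] W} (hπ : Function.Surjective π) : BarrelledWrtNorm (N ∘ π) := by
  rintro P ⟨hclosed, habsorbent, hbalanced, hconvex⟩
  have hbarrel : IsBarrelWrtNorm N (π '' P) := by
    refine ⟨fun w hw => ?_, fun w => ?_, fun c hc => ?_, hconvex.linear_image (π.restrictScalars ℝ)⟩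
    · obtain ⟨x, rfl⟩ := hπ w
      refine ⟨x, hclosed x fun ε hε => ?_, rfl⟩
      obtain ⟨_, ⟨y, hy, rfl⟩, hlt⟩ := hw ε hε
      exact ⟨y, hy, by simpa using hlt⟩
    · obtain ⟨x, rfl⟩ := hπ w
      refine (habsorbent x).eventually.mono fun c hc => ?_
      rw [← image_smul_set, ← Set.image_singleton]
      exact Set.image_mono hc
    · rw [← image_smul_set]
      exact Set.image_mono (hbalanced c hc)
  obtain ⟨ε, hε, hball⟩ := hN _ hbarrel
  refine ⟨ε, hε, fun x hx => ?_⟩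
  obtain ⟨y, hy, hyx⟩ := hball (π x) hx
  exact hclosed x fun δ hδ => ⟨y, hy, by simpa [hyx, hN0] using hδ⟩

namespace Seminorm

variable {V : Type*} [AddCommGroup V] [Module ℂ V] {f : V → ℝ}

theorem le_of_forall_exists_sub_lt (q : Seminorm ℂ V) (hf0 : ∀ x, 0 ≤ f x) {C : ℝ}
    (hq : ∀ x, q x ≤ C * f x) {x : V} {r : ℝ}
    (hx : ∀ ε : ℝ, 0 < ε → ∃ y, q y ≤ r ∧ f (x - y) < ε) : q x ≤ r := by
  refine le_of_forall_pos_le_add fun δ hδ => ?_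
  obtain ⟨y, hy, hlt⟩ := hx (δ / (|C| + 1)) (by positivity)
  have hC : C * f (x - y) ≤ δ := by
    calc C * f (x - y) ≤ |C| * f (x - y) := mul_le_mul_of_nonneg_right (le_abs_self C) (hf0 _)
      _ ≤ (|C| + 1) * (δ / (|C| + 1)) := mul_le_mul (by linarith) hlt.le (hf0 _) (by positivity)
      _ = δ := by field_simp
  calc q x = q (y + (x - y)) := by rw [add_sub_cancel]
    _ ≤ q y + q (x - y) := map_add_le_add q y (x - y)
    _ ≤ r + δ := by linarith [hq (x - y)]

theorem le_inv_mul_of_forall_lt_imp_le_one (q : Seminorm ℂ V) (hf0 : ∀ x, 0 ≤ f x)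
    (hf : ∀ (c : ℂ) (x : V), f (c • x) = ‖c‖ * f x) {ε : ℝ} (hε : 0 < ε)
    (h : ∀ x, f x < ε → q x ≤ 1) (x : V) : q x ≤ ε⁻¹ * f x := by
  refine le_of_forall_pos_le_add fun δ hδ => ?_
  set c : ℝ := ε / (f x + ε * δ)
  have hc : 0 < c := by have := hf0 x; positivity
  have hcx := h ((c : ℂ) • x) (by
    rw [hf, Complex.norm_real, Real.norm_of_nonneg hc.le, div_mul_eq_mul_div,
      div_lt_iff₀ (by have := hf0 x; positivity)]
    nlinarith [mul_pos (mul_pos hε hε) hδ])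
  rw [map_smul_eq_mul, Complex.norm_real, Real.norm_of_nonneg hc.le, ← le_div_iff₀' hc,
    one_div_div] at hcx
  calc q x ≤ (f x + ε * δ) / ε := hcx
    _ = ε⁻¹ * f x + δ := by field_simp

theorem exists_le_mul_of_barrelledWrtNorm {ι : Type*} (hbar : BarrelledWrtNorm f)
    (hf0 : ∀ x, 0 ≤ f x) (hf : ∀ (c : ℂ) (x : V), f (c • x) = ‖c‖ * f x)
    (q : ι → Seminorm ℂ V) (hq : ∀ i, ∃ C, ∀ x, q i x ≤ C * f x)
    (hbdd : ∀ x, BddAbove (Set.range fun i => q i x)) :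
    ∃ C, 0 ≤ C ∧ ∀ i x, q i x ≤ C * f x := by
  have hQ : BddAbove (Set.range q) := Seminorm.bddAbove_range_iff.2 hbdd
  set Q := ⨆ i, q i
  have hle : ∀ i x, q i x ≤ Q x := fun i x => by
    rw [Seminorm.iSup_apply hQ]
    exact le_ciSup (hbdd x) i
  have hQ_le_one : ∀ x, Q x ≤ 1 ↔ ∀ i, q i x ≤ 1 := fun x =>
    ⟨fun h i => (hle i x).trans h, fun h => by
      rw [Seminorm.iSup_apply hQ]
      exact Real.iSup_le h zero_le_one⟩
  have hbarrel : IsBarrelWrtNorm f (Q.closedBall 0 1) := by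
    refine ⟨fun x hx => ?_, Q.absorbent_closedBall_zero one_pos, Q.balanced_closedBall_zero 1,
      Q.convex_closedBall 0 1⟩
    rw [mem_closedBall_zero, hQ_le_one]
    intro i
    obtain ⟨C, hC⟩ := hq i
    refine (q i).le_of_forall_exists_sub_lt hf0 hC fun ε hε => ?_
    obtain ⟨y, hy, hlt⟩ := hx ε hε
    exact ⟨y, (hQ_le_one y).1 (Q.mem_closedBall_zero.1 hy) i, hlt⟩
  obtain ⟨ε, hε, hball⟩ := hbar _ hbarrel
  refine ⟨ε⁻¹, inv_nonneg.2 hε.le, fun i x => (hle i x).trans ?_⟩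
  exact Q.le_inv_mul_of_forall_lt_imp_le_one hf0 hf hε
    (fun y hy => Q.mem_closedBall_zero.1 (hball y hy)) x

end Seminorm

namespace Gramian

variable {Z : Type*} [AddCommGroup Z] [Module ℂ Z] {D : OrderedStarData Z}
  {E : Type*} [AddCommGroup E] [Module ℂ E] (B : Gramian D E)

def innerₗ (y : E) : E →ₗ[ℂ] Z where
  toFun := B.inner y
  map_add' := B.inner_add_right y
  map_smul' c := B.inner_smul_right c y

@[simp]
theorem innerₗ_apply (x y : E) : B.innerₗ y x = B.inner y x := rfl

theorem inner_add_left (x₁ x₂ y : E) : B.inner (x₁ + x₂) y = B.inner x₁ y + B.inner x₂ y := by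
  rw [B.inner_herm, B.inner_add_right, D.star_add, ← B.inner_herm, ← B.inner_herm]

theorem inner_smul_left (c : ℂ) (x y : E) : B.inner (c • x) y = conj c • B.inner x y := by
  rw [B.inner_herm, B.inner_smul_right, D.star_smul, ← B.inner_herm]

theorem inner_sub_left (x₁ x₂ y : E) : B.inner (x₁ - x₂) y = B.inner x₁ y - B.inner x₂ y := by
  rw [sub_eq_add_neg, ← neg_one_smul ℂ x₂, inner_add_left, inner_smul_left]
  simp [sub_eq_add_neg]

theorem inner_sub_right (x y₁ y₂ : E) : B.inner x (y₁ - y₂) = B.inner x y₁ - B.inner x y₂ :=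
  map_sub (B.innerₗ x) y₁ y₂

theorem inner_zero_left (y : E) : B.inner 0 y = 0 := by
  simpa using B.inner_smul_left 0 0 y

variable {p : Seminorm ℂ Z}

theorem tilde_nonneg (x : E) : 0 ≤ B.tilde p x := Real.sqrt_nonneg _

theorem tilde_sq (x : E) : B.tilde p x ^ 2 = p (B.inner x x) := Real.sq_sqrt (apply_nonneg _ _)

theorem tilde_smul (c : ℂ) (x : E) : B.tilde p (c • x) = ‖c‖ * B.tilde p x := by
  rw [tilde, inner_smul_left, B.inner_smul_right, smul_smul, Complex.conj_mul', map_smul_eq_mul,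
    norm_pow, Complex.norm_real, norm_norm, Real.sqrt_mul (by positivity),
    Real.sqrt_sq (by positivity), tilde]

theorem tilde_zero : B.tilde p 0 = 0 := by
  simpa using B.tilde_smul (p := p) 0 0

theorem tilde_neg (x : E) : B.tilde p (-x) = B.tilde p x := by
  simpa using B.tilde_smul (p := p) (-1) x

theorem map_inner_add_inner_swap_le (hp : D.Increasing p) (x y : E) :
    p (B.inner x y + B.inner y x) ≤ 2 * (B.tilde p x ^ 2 + B.tilde p y ^ 2) := by
  set u := B.inner (x + y) (x + y)
  set v := B.inner (x - y) (x - y)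
  have hsum : u + v = (2 : ℂ) • (B.inner x x + B.inner y y) := by
    simp only [u, v, inner_add_left, inner_sub_left, B.inner_add_right, inner_sub_right]
    module
  have hdiff : u - v = (2 : ℂ) • (B.inner x y + B.inner y x) := by
    simp only [u, v, inner_add_left, inner_sub_left, B.inner_add_right, inner_sub_right]
    module
  -- both `u` and `v` lie between `0` and `u + v` in the cone
  have hu : p u ≤ p (u + v) := hp _ _ (B.inner_self_mem _) (by simpa using B.inner_self_mem _)
  have hv : p v ≤ p (u + v) := hp _ _ (B.inner_self_mem _) (by simpa using B.inner_self_mem _)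
  have htwo : ∀ z : Z, p ((2 : ℂ) • z) = 2 * p z := fun z => by simp [map_smul_eq_mul]
  have h := map_sub_le_add p u v
  rw [hdiff, htwo] at h
  rw [hsum, htwo] at hu hv
  have := map_add_le_add p (B.inner x x) (B.inner y y)
  rw [tilde_sq, tilde_sq]
  linarith

theorem map_inner_le (hp : D.Increasing p) (x y : E) :
    p (B.inner x y) ≤ 2 * (B.tilde p x ^ 2 + B.tilde p y ^ 2) := by
  set a := B.inner x y
  set b := B.inner y x
  have hrot : B.inner x (Complex.I • y) + B.inner (Complex.I • y) x = Complex.I • (a - b) := by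
    rw [B.inner_smul_right, inner_smul_left, Complex.conj_I, smul_sub, neg_smul, sub_eq_add_neg]
  have hplus := B.map_inner_add_inner_swap_le hp x y
  have hminus := B.map_inner_add_inner_swap_le hp x (Complex.I • y)
  rw [hrot, map_smul_eq_mul, tilde_smul, Complex.norm_I, one_mul, one_mul] at hminus
  have htwo : 2 * p a ≤ p (a + b) + p (a - b) := by
    have := map_add_le_add p (a + b) (a - b)
    rwa [add_add_sub_cancel, ← two_smul ℂ a, map_smul_eq_mul, Complex.norm_two] at this
  linarith

theorem map_inner_le_four_mul_tilde (hp : D.Increasing p) (x y : E) :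
    p (B.inner x y) ≤ 4 * B.tilde p x * B.tilde p y := by
  suffices p (B.inner x y) / 2 ≤ 2 * B.tilde p x * B.tilde p y by linarith
  refine le_two_mul_mul_of_forall_pos (B.tilde_nonneg x) (B.tilde_nonneg y) fun t ht => ?_
  -- `p̃` rescales under `x ↦ t • x`, `y ↦ t⁻¹ • y` while the gramian does not
  have hscale : B.inner ((t : ℂ) • x) (((t⁻¹ : ℝ) : ℂ) • y) = B.inner x y := by
    rw [inner_smul_left, B.inner_smul_right, Complex.conj_ofReal, smul_smul, ← Complex.ofReal_mul,
      mul_inv_cancel₀ ht.ne', Complex.ofReal_one, one_smul]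
  have := B.map_inner_le hp ((t : ℂ) • x) (((t⁻¹ : ℝ) : ℂ) • y)
  rw [hscale, tilde_smul, tilde_smul, Complex.norm_real, Complex.norm_real,
    Real.norm_of_nonneg ht.le, Real.norm_of_nonneg (inv_nonneg.2 ht.le)] at this
  linarith

theorem tilde_add_le_of_tilde_eq_zero (hp : D.Increasing p) (x : E) {y : E}
    (hy : B.tilde p y = 0) : B.tilde p (x + y) ≤ B.tilde p x := by
  have hxy := B.map_inner_le_four_mul_tilde hp x y
  have hyx := B.map_inner_le_four_mul_tilde hp y x
  have hyy : p (B.inner y y) = 0 := by rw [← B.tilde_sq, hy, zero_pow two_ne_zero]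
  rw [hy, mul_zero] at hxy
  rw [hy, mul_zero, zero_mul] at hyx
  have hle : p (B.inner (x + y) (x + y)) ≤ p (B.inner x x) := by
    rw [inner_add_left, B.inner_add_right, B.inner_add_right]
    linarith [map_add_le_add p (B.inner x x + B.inner x y) (B.inner y x + B.inner y y),
      map_add_le_add p (B.inner x x) (B.inner x y), map_add_le_add p (B.inner y x) (B.inner y y)]
  exact Real.sqrt_le_sqrt hle

theorem tilde_add_of_tilde_eq_zero (hp : D.Increasing p) (x : E) {y : E}
    (hy : B.tilde p y = 0) : B.tilde p (x + y) = B.tilde p x := by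
  refine le_antisymm (B.tilde_add_le_of_tilde_eq_zero hp x hy) ?_
  simpa using B.tilde_add_le_of_tilde_eq_zero hp (x + y) (y := -y) (by rwa [tilde_neg])

/-- The null space `Ĩ_p` of `p̃`. -/
def tildeKer (hp : D.Increasing p) : Submodule ℂ E where
  carrier := {x | B.tilde p x = 0}
  add_mem' {x} _ hx hy := (B.tilde_add_of_tilde_eq_zero hp x hy).trans hx
  zero_mem' := B.tilde_zero
  smul_mem' c x (hx : B.tilde p x = 0) := by
    show B.tilde p (c • x) = 0
    rw [tilde_smul, hx, mul_zero]

theorem barrelledWrtNorm_tilde (hp : D.Increasing p)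
    (h : ∀ N : Submodule ℂ E, (N : Set E) = {x : E | B.tilde p x = 0} →
      ∀ nq : (E ⧸ N) → ℝ, (∀ x : E, nq (Submodule.Quotient.mk x) = B.tilde p x) →
        BarrelledWrtNorm nq) :
    BarrelledWrtNorm (B.tilde p) := by
  let nq : E ⧸ B.tildeKer hp → ℝ := Quotient.lift (B.tilde p) fun x y hxy => by
    have hxy : B.tilde p (x - y) = 0 := (Submodule.quotientRel_def _).1 hxy
    rw [← B.tilde_add_of_tilde_eq_zero hp y hxy, add_sub_cancel]
  exact (h _ rfl nq fun _ => rfl).comp_surjective B.tilde_zero (Submodule.mkQ_surjective _)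

theorem tilde_le_of_forall_tilde_le_one {z : E} {M : ℝ}
    (h : ∀ y, B.tilde p y ≤ 1 → p (B.inner y z) ≤ M) : B.tilde p z ≤ M := by
  rcases (B.tilde_nonneg z).eq_or_lt with hz | hz
  · rw [← hz]
    simpa [inner_zero_left] using h 0 (by rw [tilde_zero]; exact zero_le_one)
  · set r := (B.tilde p z)⁻¹
    have hr : ‖((r : ℝ) : ℂ)‖ = r := by rw [Complex.norm_real, Real.norm_of_nonneg (by positivity)]
    have h1 := h ((r : ℂ) • z) (by rw [tilde_smul, hr, inv_mul_cancel₀ hz.ne'])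
    rwa [inner_smul_left, map_smul_eq_mul, Complex.norm_conj, hr, ← B.tilde_sq, sq, ← mul_assoc,
      inv_mul_cancel₀ hz.ne', one_mul] at h1

end Gramian

theorem Gramian.IsAdjoint.inner_apply_left {Z E F : Type*} [AddCommGroup Z] [Module ℂ Z]
    {D : OrderedStarData Z} [AddCommGroup E] [Module ℂ E] [AddCommGroup F] [Module ℂ F]
    {BE : Gramian D E} {BF : Gramian D F} {T : E →ₗ[ℂ] F} {S : F →ₗ[ℂ] E}
    (h : BE.IsAdjoint BF T S) (x : E) (y : F) : BF.inner y (T x) = BE.inner (S y) x := by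
  rw [BF.inner_herm, h, ← BE.inner_herm]

theorem statement15_general {Z E F : Type*} [AddCommGroup Z] [Module ℂ Z] [TopologicalSpace Z]
    [AddCommGroup E] [Module ℂ E]
    [AddCommGroup F] [Module ℂ F]
    (D : TopOrderedStarSpace Z)
    (S₀ : Set (Seminorm ℂ Z)) (hS₀ : ∀ p ∈ S₀, D.MemSStar p)
    (BE : Gramian D.toOrderedStarData E) (BF : Gramian D.toOrderedStarData F)
    (hquotbar : ∀ p ∈ S₀, ∀ N : Submodule ℂ E, (N : Set E) = {x : E | BE.tilde p x = 0} →
      ∀ nq : (E ⧸ N) → ℝ, (∀ x : E, nq (Submodule.Quotient.mk x) = BE.tilde p x) →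
        BarrelledWrtNorm nq)
    (T : E →ₗ[ℂ] F) (hT : BE.Adjointable BF T) :
    ∀ p ∈ S₀, ∃ C : ℝ, 0 ≤ C ∧ ∀ x : E, BF.tilde p (T x) ≤ C * BE.tilde p x := by
  intro p hp
  obtain ⟨S, hS⟩ := hT
  have hinc : D.Increasing p := (hS₀ p hp).2.1
  obtain ⟨C, hC0, hC⟩ := Seminorm.exists_le_mul_of_barrelledWrtNorm
    (BE.barrelledWrtNorm_tilde hinc (hquotbar p hp)) BE.tilde_nonneg BE.tilde_smul
    (fun y : {y : F // BF.tilde p y ≤ 1} => p.comp ((BF.innerₗ y).comp T))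
    (fun y => ⟨4 * BE.tilde p (S y), fun x => by
      simpa [hS.inner_apply_left, mul_right_comm] using
        BE.map_inner_le_four_mul_tilde hinc (S y) x⟩)
    (fun x => ⟨4 * BF.tilde p (T x), Set.forall_mem_range.2 fun y => by
      simp only [Seminorm.comp_apply, LinearMap.comp_apply, Gramian.innerₗ_apply]
      nlinarith [BF.map_inner_le_four_mul_tilde hinc y (T x), y.2, BF.tilde_nonneg (p := p) (T x)]⟩)
  exact ⟨C, hC0, fun x => BF.tilde_le_of_forall_tilde_le_one fun y hy => hC ⟨y, hy⟩ x⟩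

/-- If the quotient normed VE-spaces `E_p`, `p ∈ S₀(Z)`, are barrelled, then
every adjointable operator `T : E → F` is `S₀(Z)`-bounded. -/
theorem statement15 {Z E F : Type*} [AddCommGroup Z] [Module ℂ Z] [TopologicalSpace Z]
    [AddCommGroup E] [Module ℂ E] [TopologicalSpace E]
    [AddCommGroup F] [Module ℂ F] [TopologicalSpace F]
    (D : TopOrderedStarSpace Z)
    (S₀ : Set (Seminorm ℂ Z)) (hS₀ : ∀ p ∈ S₀, D.MemSStar p)
    (hS₀gen : GeneratesTopology S₀)
    (BE : Gramian D.toOrderedStarData E) (BF : Gramian D.toOrderedStarData F)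
    (hE : BE.IsVETopology S₀) (hF : BF.IsVETopology S₀)
    (hquotbar : ∀ p ∈ S₀, ∀ N : Submodule ℂ E, (N : Set E) = {x : E | BE.tilde p x = 0} →
      ∀ nq : (E ⧸ N) → ℝ, (∀ x : E, nq (Submodule.Quotient.mk x) = BE.tilde p x) →
        BarrelledWrtNorm nq)
    (T : E →ₗ[ℂ] F) (hT : BE.Adjointable BF T) :
    ∀ p ∈ S₀, ∃ C : ℝ, 0 ≤ C ∧ ∀ x : E, BF.tilde p (T x) ≤ C * BE.tilde p x :=
  statement15_general D S₀ hS₀ BE BF hquotbar T hT
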